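/- Let ψ, ψ' : G → G be commutator-central endomorphisms of a group G with ⁅ψ(g), ψ'(h)⁆ ∈ Z(G) for all g, h ∈ G, and let α, β ∈ 𝓔. Write g ∘ h := g ∘_{ψ,α} h and g ⋆ h := g ∘_{ψ',β} h; write g̃ := ψ_α(g)⁻¹·g⁻¹·ψ_α(g) (the ∘-inverse of g) and ḡ := ψ'_β(g)⁻¹·g⁻¹·ψ'_β(g) (the ⋆-inverse of g). Then the family N = {η_g : g ∈ G} with η_g(h) = g ∘ h is stable under conjugation by left ⋆-translations: for all k, g, h ∈ G, k ⋆ (g ∘ (k̄ ⋆ h)) = ((k ⋆ g) ∘ k̃) ∘ h, where k̄ is the ⋆-inverse of k and k̃ is the ∘-inverse of k. -/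

import Mathlib

/-- Evaluation of an element of the free group `𝓔 = FreeGroup (Monoid.End G)`
at an element `g : G`: the image of `α` under the homomorphism `𝓔 → G`
given by `FreeGroup.lift (fun φ => φ g)`. -/
def evalE {G : Type*} [Group G] (α : FreeGroup (Monoid.End G)) (g : G) : G :=
  FreeGroup.lift (fun φ : Monoid.End G => φ g) α

/-- The binary operation `g ∘_{ψ,α} h = g · ψ_α(g) · h · ψ_α(g)⁻¹`, where
`ψ_α(g) = ψ (α(g))`. -/
def op {G : Type*} [Group G] (ψ : Monoid.End G) (α : FreeGroup (Monoid.End G)) (g h : G) : G :=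
  g * ψ (evalE α g) * h * (ψ (evalE α g))⁻¹

open scoped commutatorElement

/-!
Conjugation by `c` depends only on the class of `c` modulo the centre `Z`, and modulo `Z` the
maps `g ↦ ψ_α(g)` and `g ↦ ψ'_β(g)` are homomorphisms `A, B : G → G/Z` with pairwise commuting
values. Hence `g ∘ h = g · σ(A g)(h)` and `g ⋆ h = g · σ(B g)(h)` for the conjugation action `σ`
of `G/Z` on `G`, and `A`, `B` are invariant under `σ`. In this form both sides of the identity
expand to `k · σ(B k)(g) · σ(A g)(k⁻¹) · σ(A g)(h)`.
-/

section TwistedMul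

variable {G Q : Type*} [Group G] [Group Q] (σ : Q →* MulAut G) (A B : G →* Q)

def twistedMul (x y : G) : G := x * σ (A x) y

def twistedInv (x : G) : G := σ (A x)⁻¹ x⁻¹

variable {σ A B}

lemma map_twistedMul (hAσ : ∀ (q : Q) (x : G), A (σ q x) = A x) (x y : G) :
    A (twistedMul σ B x y) = A x * A y := by
  rw [twistedMul, map_mul, hAσ]

lemma map_twistedInv (hAσ : ∀ (q : Q) (x : G), A (σ q x) = A x) (x : G) :
    A (twistedInv σ B x) = (A x)⁻¹ := by
  rw [twistedInv, hAσ, map_inv]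

lemma conj_conj_inv_of_commute {q r : Q} (hqr : Commute q r) (x : G) :
    σ q (σ r (σ q⁻¹ x)) = σ r x := by
  rw [← MulAut.mul_apply, ← MulAut.mul_apply, ← map_mul, ← map_mul, hqr.eq, mul_inv_cancel_right]

lemma twistedMul_conj_twistedMul
    (hAB : ∀ x y : G, Commute (A x) (B y)) (hAA : ∀ x y : G, Commute (A x) (A y))
    (hAσ : ∀ (q : Q) (x : G), A (σ q x) = A x) (hBσ : ∀ (q : Q) (x : G), B (σ q x) = B x)
    (k g h : G) :
    twistedMul σ B k (twistedMul σ A g (twistedMul σ B (twistedInv σ B k) h)) =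
      twistedMul σ A (twistedMul σ A (twistedMul σ B k g) (twistedInv σ A k)) h := by
  have hkgk : twistedMul σ A (twistedMul σ B k g) (twistedInv σ A k) =
      twistedMul σ B k g * σ (A g) k⁻¹ := by
    rw [twistedMul, map_twistedMul hAσ, twistedInv, map_mul, MulAut.mul_apply,
      conj_conj_inv_of_commute (hAA k g)]
  have hA : A (twistedMul σ B k g * σ (A g) k⁻¹) = A g := by
    rw [map_mul, map_twistedMul hAσ, hAσ, map_inv, (hAA k g).eq, mul_inv_cancel_right]
  calc twistedMul σ B k (twistedMul σ A g (twistedMul σ B (twistedInv σ B k) h))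
      = k * σ (B k) g * σ (A g) k⁻¹ * σ (A g) h := by
        unfold twistedMul
        rw [map_twistedInv hBσ, twistedInv]
        simp only [map_mul, conj_conj_inv_of_commute (hAB g k).symm, mul_assoc]
    _ = (twistedMul σ B k g * σ (A g) k⁻¹) * σ (A (twistedMul σ B k g * σ (A g) k⁻¹)) h := by
        rw [hA]; rfl
    _ = twistedMul σ A (twistedMul σ A (twistedMul σ B k g) (twistedInv σ A k)) h := by
        rw [← hkgk]; rfl

end TwistedMul

section Eval

variable {G H : Type*} [Group G] [Group H]

@[simp] lemma evalE_one (g : G) : evalE (1 : FreeGroup (Monoid.End G)) g = 1 :=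
  map_one _

@[simp] lemma evalE_of (φ : Monoid.End G) (g : G) : evalE (FreeGroup.of φ) g = φ g :=
  FreeGroup.lift_apply_of

@[simp] lemma evalE_mul (γ δ : FreeGroup (Monoid.End G)) (g : G) :
    evalE (γ * δ) g = evalE γ g * evalE δ g :=
  map_mul _ _ _

@[simp] lemma evalE_inv (γ : FreeGroup (Monoid.End G)) (g : G) :
    evalE γ⁻¹ g = (evalE γ g)⁻¹ :=
  map_inv _ _

lemma map_evalE_mul (f : G →* H) (hf : ∀ a b : G, Commute (f a) (f b))
    (γ : FreeGroup (Monoid.End G)) (x y : G) :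
    f (evalE γ (x * y)) = f (evalE γ x) * f (evalE γ y) := by
  induction γ using FreeGroup.induction_on with
  | C1 => simp
  | of φ => simp
  | inv_of φ _ =>
    simp only [evalE_inv, evalE_of, map_inv, map_mul, mul_inv_rev]
    exact (hf (φ y) (φ x)).inv_inv.eq
  | mul γ δ hγ hδ =>
    simp only [evalE_mul, map_mul, hγ, hδ]
    exact (hf (evalE γ y) (evalE δ x)).mul_mul_mul_comm _ _

def evalHom (f : G →* H) (hf : ∀ a b : G, Commute (f a) (f b))
    (γ : FreeGroup (Monoid.End G)) : G →* H :=
  MonoidHom.mk' (fun x => f (evalE γ x)) (map_evalE_mul f hf γ)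

end Eval

section ModCenter

variable {G H : Type*} [Group G] [Group H]

def conjModCenter : G ⧸ Subgroup.center G →* MulAut G :=
  QuotientGroup.lift _ MulAut.conj fun z hz => by
    ext x
    simp [← Subgroup.mem_center_iff.mp hz x]

lemma conjModCenter_mk (c x : G) :
    conjModCenter (c : G ⧸ Subgroup.center G) x = c * x * c⁻¹ := rfl

lemma map_conjModCenter_apply (f : G →* H) (hf : ∀ a b : G, Commute (f a) (f b))
    (q : G ⧸ Subgroup.center G) (x : G) : f (conjModCenter q x) = f x := by
  induction q using QuotientGroup.induction_on with
  | H c => rw [conjModCenter_mk, map_mul, map_mul, map_inv, (hf c x).eq, mul_inv_cancel_right]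

lemma commute_mk_of_commutatorElement_mem {N : Subgroup G} [N.Normal] {a b : G}
    (h : ⁅a, b⁆ ∈ N) : Commute (a : G ⧸ N) (b : G ⧸ N) := by
  rw [← commutatorElement_eq_one_iff_commute]
  exact (map_commutatorElement (QuotientGroup.mk' _) a b).symm.trans
    ((QuotientGroup.eq_one_iff _).mpr h)

abbrev modCenter (ψ : Monoid.End G) : G →* G ⧸ Subgroup.center G :=
  (QuotientGroup.mk' _).comp ψ

lemma commute_modCenter (ψ ψ' : Monoid.End G)
    (h : ∀ g h : G, ⁅ψ g, ψ' h⁆ ∈ Subgroup.center G) (x y : G) :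
    Commute (modCenter ψ x) (modCenter ψ' y) :=
  commute_mk_of_commutatorElement_mem (h x y)

lemma op_eq_twistedMul (ψ : Monoid.End G)
    (hψ : ∀ a b : G, Commute (modCenter ψ a) (modCenter ψ b)) (α : FreeGroup (Monoid.End G)) :
    op ψ α = twistedMul conjModCenter (evalHom (modCenter ψ) hψ α) := by
  ext x y
  change _ = x * (ψ (evalE α x) * y * (ψ (evalE α x))⁻¹)
  simp only [op, mul_assoc]

lemma inv_conj_eq_twistedInv (ψ : Monoid.End G)
    (hψ : ∀ a b : G, Commute (modCenter ψ a) (modCenter ψ b)) (α : FreeGroup (Monoid.End G))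
    (k : G) :
    (ψ (evalE α k))⁻¹ * k⁻¹ * ψ (evalE α k) =
      twistedInv conjModCenter (evalHom (modCenter ψ) hψ α) k := by
  change _ = (ψ (evalE α k))⁻¹ * k⁻¹ * (ψ (evalE α k))⁻¹⁻¹
  rw [inv_inv]

end ModCenter

/-- with `∘ = ∘_{ψ,α}`, `⋆ = ∘_{ψ',β}`, the family `N = {η_g}`,
`η_g(h) = g ∘ h`, is stable under conjugation by left `⋆`-translations:
`k ⋆ (g ∘ (k̄ ⋆ h)) = ((k ⋆ g) ∘ k̃) ∘ h`, where `k̄` is the `⋆`-inverse and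
`k̃` the `∘`-inverse of `k`. -/
theorem op_stable_two_maps {G : Type*} [Group G]
    (ψ ψ' : Monoid.End G)
    (hψ : ∀ g h : G, ψ ⁅g, h⁆ ∈ Subgroup.center G)
    (hψ' : ∀ g h : G, ψ' ⁅g, h⁆ ∈ Subgroup.center G)
    (hcomm : ∀ g h : G, ⁅ψ g, ψ' h⁆ ∈ Subgroup.center G)
    (α β : FreeGroup (Monoid.End G)) (k g h : G) :
    op ψ' β k (op ψ α g (op ψ' β ((ψ' (evalE β k))⁻¹ * k⁻¹ * ψ' (evalE β k)) h)) =
      op ψ α (op ψ α (op ψ' β k g) ((ψ (evalE α k))⁻¹ * k⁻¹ * ψ (evalE α k))) h := by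
  have hAA := commute_modCenter ψ ψ fun a b => map_commutatorElement ψ a b ▸ hψ a b
  have hBB := commute_modCenter ψ' ψ' fun a b => map_commutatorElement ψ' a b ▸ hψ' a b
  rw [op_eq_twistedMul ψ hAA, op_eq_twistedMul ψ' hBB, inv_conj_eq_twistedInv ψ hAA,
    inv_conj_eq_twistedInv ψ' hBB]
  exact twistedMul_conj_twistedMul (A := evalHom _ hAA α) (B := evalHom _ hBB β)
    (fun _ _ => commute_modCenter ψ ψ' hcomm _ _) (fun _ _ => hAA _ _)
    (map_conjModCenter_apply _ fun _ _ => hAA _ _) (map_conjModCenter_apply _ fun _ _ => hBB _ _)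
    k g h
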